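/- arXiv:2308.06671 — 3 statements merged into one kernel-verified Lean document; each statement's English description precedes it below -/
import Mathlib

section
/- Let α₁, α₂, α₃, T, β₂ > 0 with Δ := α₁α₃ − α₂² > 0, and define for v > 0 the density shape p(v) = v^{β₂/(2α₃T) − 3/2} · (α₁v² − 2α₂v + α₃)^{−1 − β₂/(4Tα₃)} · exp(−(1/(2T)) · ((α₃β₁ − α₂β₂)/(α₃√Δ)) · arctan((α₁v − α₂)/√Δ)) for a fixed β₁ ∈ ℝ. Then ∫₀^∞ p(v) dv < ∞ if and only if T < β₂/α₃. -/
open MeasureTheory Real Set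

/-- Phase transition of the depth-1 stationary density: integrability on `(0,∞)`
holds iff `T < β₂/α₃`. -/
theorem stmt7 (α₁ α₂ α₃ T β₂ : ℝ) (β₁ : ℝ)
    (h1 : 0 < α₁) (h2 : 0 < α₂) (h3 : 0 < α₃) (hT : 0 < T) (hβ₂ : 0 < β₂)
    (hΔ : 0 < α₁ * α₃ - α₂ ^ 2) :
    IntegrableOn (fun v : ℝ =>
        v ^ (β₂ / (2 * α₃ * T) - 3 / 2 : ℝ) *
          (α₁ * v ^ 2 - 2 * α₂ * v + α₃) ^ (-1 - β₂ / (4 * T * α₃) : ℝ) *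
          Real.exp (-(1 / (2 * T)) * ((α₃ * β₁ - α₂ * β₂) / (α₃ * Real.sqrt (α₁ * α₃ - α₂ ^ 2))) *
            Real.arctan ((α₁ * v - α₂) / Real.sqrt (α₁ * α₃ - α₂ ^ 2))))
      (Set.Ioi 0) volume
      ↔ T < β₂ / α₃ := by
  set a : ℝ := β₂ / (2 * α₃ * T) - 3 / 2 with ha_def
  set b : ℝ := -1 - β₂ / (4 * T * α₃) with hb_def
  set K : ℝ := -(1 / (2 * T)) * ((α₃ * β₁ - α₂ * β₂) / (α₃ * Real.sqrt (α₁ * α₃ - α₂ ^ 2)))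
    with hK_def
  set Q : ℝ → ℝ := fun v => α₁ * v ^ 2 - 2 * α₂ * v + α₃ with hQ_def
  set f : ℝ → ℝ := fun v =>
      v ^ a * Q v ^ b * Real.exp (K * Real.arctan ((α₁ * v - α₂) / Real.sqrt (α₁ * α₃ - α₂ ^ 2)))
    with hf_def
  have hb_neg : b ≤ 0 := by
    have : 0 < β₂ / (4 * T * α₃) := by positivity
    simp only [hb_def]; linarith
  have hQpos : ∀ v : ℝ, 0 < Q v := by
    intro v
    simp only [hQ_def]
    nlinarith [sq_nonneg (α₁ * v - α₂), h1, hΔ]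
  -- exponential factor bounds
  have hexp_ub : ∀ v : ℝ,
      Real.exp (K * Real.arctan ((α₁ * v - α₂) / Real.sqrt (α₁ * α₃ - α₂ ^ 2)))
        ≤ Real.exp (|K| * (π / 2)) := by
    intro v
    apply Real.exp_le_exp.mpr
    calc K * Real.arctan _ ≤ |K * Real.arctan _| := le_abs_self _
      _ = |K| * |Real.arctan _| := abs_mul _ _
      _ ≤ |K| * (π / 2) := by
          apply mul_le_mul_of_nonneg_left _ (abs_nonneg K)
          exact (abs_lt.mpr ⟨Real.neg_pi_div_two_lt_arctan _, Real.arctan_lt_pi_div_two _⟩).le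
  have hexp_lb : ∀ v : ℝ,
      Real.exp (-(|K| * (π / 2)))
        ≤ Real.exp (K * Real.arctan ((α₁ * v - α₂) / Real.sqrt (α₁ * α₃ - α₂ ^ 2))) := by
    intro v
    apply Real.exp_le_exp.mpr
    have : |K * Real.arctan ((α₁ * v - α₂) / Real.sqrt (α₁ * α₃ - α₂ ^ 2))| ≤ |K| * (π / 2) := by
      rw [abs_mul]
      apply mul_le_mul_of_nonneg_left _ (abs_nonneg K)
      exact (abs_lt.mpr ⟨Real.neg_pi_div_two_lt_arctan _, Real.arctan_lt_pi_div_two _⟩).le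
    linarith [neg_abs_le (K * Real.arctan ((α₁ * v - α₂) / Real.sqrt (α₁ * α₃ - α₂ ^ 2)))]
  have hfpos : ∀ v ∈ Ioi (0:ℝ), 0 < f v := by
    intro v hv
    have hv0 : 0 < v := hv
    have := hQpos v
    positivity
  -- measurability
  have hfcont : ContinuousOn f (Ioi 0) := by
    apply ContinuousOn.mul
    apply ContinuousOn.mul
    · exact continuousOn_id.rpow_const (fun x hx => Or.inl (ne_of_gt hx))
    · apply ContinuousOn.rpow_const
      · fun_prop
      · intro x _; exact Or.inl (ne_of_gt (hQpos x))
    · apply Continuous.continuousOn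
      exact Real.continuous_exp.comp (continuous_const.mul (Real.continuous_arctan.comp
        (((continuous_const.mul continuous_id).sub continuous_const).div_const _)))
  have hfmeas : AEStronglyMeasurable f (volume.restrict (Ioi 0)) :=
    hfcont.aestronglyMeasurable measurableSet_Ioi
  have hTα : (α₃ : ℝ) * T ≠ 0 := by positivity
  have hiff : (-1 < a) ↔ T < β₂ / α₃ := by
    rw [lt_div_iff₀ h3, ha_def]
    constructor
    · intro h
      have h2T : 0 < 2 * α₃ * T := by positivity
      have := (lt_div_iff₀ h2T).mp (by linarith : (1:ℝ)/2 < β₂ / (2 * α₃ * T))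
      linarith
    · intro h
      have h2T : 0 < 2 * α₃ * T := by positivity
      have : (1:ℝ)/2 < β₂ / (2 * α₃ * T) := (lt_div_iff₀ h2T).mpr (by linarith)
      linarith
  constructor
  · -- integrable → T < β₂/α₃
    intro hInt
    rw [← hiff]
    by_contra hcon
    push_neg at hcon
    -- a ≤ -1; show v^a integrable on Ioo 0 1, contradiction
    have hQub : ∀ v ∈ Ioo (0:ℝ) 1, Q v ≤ α₁ + α₃ := by
      intro v hv
      have h0 := hv.1; have h1' := hv.2
      simp only [hQ_def]
      nlinarith [mul_nonneg h2.le h0.le, mul_nonneg (mul_nonneg h1.le (by linarith : (0:ℝ) ≤ 1 - v)) (by linarith : (0:ℝ) ≤ 1 + v)]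
    set c₀ : ℝ := (α₁ + α₃) ^ b * Real.exp (-(|K| * (π / 2))) with hc₀
    have hc₀pos : 0 < c₀ := by
      have : (0:ℝ) < α₁ + α₃ := by linarith
      positivity
    have hlb : ∀ v ∈ Ioo (0:ℝ) 1, c₀ * v ^ a ≤ f v := by
      intro v hv
      have hv0 : 0 < v := hv.1
      have hQb : (α₁ + α₃) ^ b ≤ Q v ^ b :=
        Real.rpow_le_rpow_of_nonpos (hQpos v) (hQub v hv) hb_neg
      have hva : (0:ℝ) ≤ v ^ a := by positivity
      calc c₀ * v ^ a = v ^ a * ((α₁ + α₃) ^ b * Real.exp (-(|K| * (π / 2)))) := by ring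
        _ ≤ v ^ a * (Q v ^ b * Real.exp (K * Real.arctan ((α₁ * v - α₂) / Real.sqrt (α₁ * α₃ - α₂ ^ 2)))) := by
            apply mul_le_mul_of_nonneg_left _ hva
            exact mul_le_mul hQb (hexp_lb v) (Real.exp_pos _).le
              (Real.rpow_nonneg (hQpos v).le _)
        _ = f v := by simp only [hf_def]; ring
    have hIntOo : IntegrableOn (fun v : ℝ => v ^ a) (Ioo 0 1) volume := by
      apply Integrable.mono' ((hInt.mono_set Ioo_subset_Ioi_self).const_mul (1 / c₀))
      · exact (continuousOn_id.rpow_const (fun x hx => Or.inl (ne_of_gt hx.1))).aestronglyMeasurable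
          measurableSet_Ioo
      · filter_upwards [ae_restrict_mem measurableSet_Ioo] with v hv
        have hv0 : 0 < v := hv.1
        rw [Real.norm_eq_abs, abs_of_nonneg (by positivity : (0:ℝ) ≤ v ^ a)]
        calc v ^ a = 1 / c₀ * (c₀ * v ^ a) := by field_simp
          _ ≤ 1 / c₀ * f v := mul_le_mul_of_nonneg_left (hlb v hv) (by positivity)
    have := (intervalIntegral.integrableOn_Ioo_rpow_iff one_pos).mp hIntOo
    linarith
  · -- T < β₂/α₃ → integrable
    intro hTlt
    have ha : -1 < a := hiff.mpr hTlt
    set V₀ : ℝ := max 1 (4 * α₂ / α₁) with hV₀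
    have hV₀1 : (1:ℝ) ≤ V₀ := le_max_left _ _
    have hV₀pos : (0:ℝ) < V₀ := lt_of_lt_of_le one_pos hV₀1
    rw [show Ioi (0:ℝ) = Ioc 0 V₀ ∪ Ioi V₀ from (Ioc_union_Ioi_eq_Ioi hV₀pos.le).symm]
    apply IntegrableOn.union
    · -- near 0
      have hQlb : ∀ v : ℝ, (α₁ * α₃ - α₂ ^ 2) / α₁ ≤ Q v := by
        intro v
        simp only [hQ_def]
        rw [div_le_iff₀ h1]
        nlinarith [sq_nonneg (α₁ * v - α₂)]
      set C₁ : ℝ := ((α₁ * α₃ - α₂ ^ 2) / α₁) ^ b * Real.exp (|K| * (π / 2)) with hC₁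
      have hg : IntegrableOn (fun v : ℝ => C₁ * v ^ a) (Ioc 0 V₀) volume := by
        have h0 : IntervalIntegrable (fun v : ℝ => v ^ a) volume 0 V₀ :=
          intervalIntegral.intervalIntegrable_rpow' ha
        exact ((intervalIntegrable_iff_integrableOn_Ioc_of_le hV₀pos.le).mp h0).const_mul C₁
      apply Integrable.mono' hg (hfmeas.mono_set Ioc_subset_Ioi_self)
      filter_upwards [ae_restrict_mem measurableSet_Ioc] with v hv
      have hv0 : 0 < v := hv.1
      rw [Real.norm_eq_abs, abs_of_nonneg (hfpos v hv0).le]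
      have hQb : Q v ^ b ≤ ((α₁ * α₃ - α₂ ^ 2) / α₁) ^ b :=
        Real.rpow_le_rpow_of_nonpos (by positivity) (hQlb v) hb_neg
      calc f v = v ^ a * (Q v ^ b * Real.exp (K * Real.arctan ((α₁ * v - α₂) / Real.sqrt (α₁ * α₃ - α₂ ^ 2)))) := by
            simp only [hf_def]; ring
        _ ≤ v ^ a * (((α₁ * α₃ - α₂ ^ 2) / α₁) ^ b * Real.exp (|K| * (π / 2))) := by
            apply mul_le_mul_of_nonneg_left _ (by positivity)
            exact mul_le_mul hQb (hexp_ub v) (Real.exp_pos _).le (by positivity)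
        _ = C₁ * v ^ a := by ring
    · -- tail
      have hab : a + 2 * b = -7/2 := by
        simp only [ha_def, hb_def]
        field_simp
        ring
      set C₂ : ℝ := (α₁ / 2) ^ b * Real.exp (|K| * (π / 2)) with hC₂
      have hg : IntegrableOn (fun v : ℝ => C₂ * v ^ (-7/2 : ℝ)) (Ioi V₀) volume :=
        (integrableOn_Ioi_rpow_of_lt (by norm_num) hV₀pos).const_mul C₂
      apply Integrable.mono' hg (hfmeas.mono_set (Ioi_subset_Ioi hV₀pos.le))
      filter_upwards [ae_restrict_mem measurableSet_Ioi] with v hv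
      have hv1 : (1:ℝ) ≤ v := le_trans hV₀1 (le_of_lt hv)
      have hv0 : 0 < v := lt_of_lt_of_le one_pos hv1
      have hv4 : 4 * α₂ / α₁ ≤ v := le_trans (le_max_right _ _) (le_of_lt hv)
      have hQlb2 : (α₁ / 2) * v ^ 2 ≤ Q v := by
        have : 4 * α₂ ≤ α₁ * v := by
          rw [div_le_iff₀ h1] at hv4; linarith [hv4]
        simp only [hQ_def]
        nlinarith
      rw [Real.norm_eq_abs, abs_of_nonneg (hfpos v hv0).le]
      have hQb : Q v ^ b ≤ ((α₁ / 2) * v ^ 2) ^ b :=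
        Real.rpow_le_rpow_of_nonpos (by positivity) hQlb2 hb_neg
      have hsplit : ((α₁ / 2) * v ^ 2) ^ b = (α₁ / 2) ^ b * v ^ (2 * b) := by
        rw [Real.mul_rpow (by positivity) (by positivity)]
        congr 1
        rw [← Real.rpow_natCast v 2, ← Real.rpow_mul hv0.le]
        norm_num
      calc f v = v ^ a * (Q v ^ b * Real.exp (K * Real.arctan ((α₁ * v - α₂) / Real.sqrt (α₁ * α₃ - α₂ ^ 2)))) := by
            simp only [hf_def]; ring
        _ ≤ v ^ a * (((α₁ / 2) * v ^ 2) ^ b * Real.exp (|K| * (π / 2))) := by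
            apply mul_le_mul_of_nonneg_left _ (by positivity)
            exact mul_le_mul hQb (hexp_ub v) (Real.exp_pos _).le (by positivity)
        _ = C₂ * (v ^ a * v ^ (2 * b)) := by rw [hsplit]; ring
        _ = C₂ * v ^ (-7/2 : ℝ) := by rw [← Real.rpow_add hv0, hab]
end

section
/- Let α₁, α₂, α₃ > 0 with Δ := α₁α₃ − α₂² > 0, let β₁ ∈ ℝ, T > 0, and set c = β₁/(2Tα₁) > 0 when β₁ > 0. Then the function p(v) = (α₁v² − 2α₂v + α₃)^{−1−c} · exp(−(1/T)·((α₂β₁ − α₁β₂)/(α₁√Δ)) · arctan((α₁v − α₂)/√Δ)) is integrable over ℝ for every T > 0, provided β₁ > 0. -/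
open MeasureTheory

/-- The depth-0 stationary distribution is normalizable for every `T > 0`. -/
theorem stmt8 (α₁ α₂ α₃ β₁ β₂ T : ℝ)
    (h1 : 0 < α₁) (h2 : 0 < α₂) (h3 : 0 < α₃)
    (hΔ : 0 < α₁ * α₃ - α₂ ^ 2) (hT : 0 < T) (hβ₁ : 0 < β₁) :
    Integrable (fun v : ℝ =>
        (α₁ * v ^ 2 - 2 * α₂ * v + α₃) ^ (-1 - β₁ / (2 * T * α₁) : ℝ) *
          Real.exp (-(1 / T) * ((α₂ * β₁ - α₁ * β₂) / (α₁ * Real.sqrt (α₁ * α₃ - α₂ ^ 2))) *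
            Real.arctan ((α₁ * v - α₂) / Real.sqrt (α₁ * α₃ - α₂ ^ 2))))
      volume := by
  set Δ : ℝ := α₁ * α₃ - α₂ ^ 2 with hΔdef
  set s : ℝ := Real.sqrt Δ with hsdef
  have hs : 0 < s := Real.sqrt_pos.mpr hΔ
  have hs2 : s ^ 2 = Δ := Real.sq_sqrt hΔ.le
  set e : ℝ := -1 - β₁ / (2 * T * α₁) with hedef
  have hc : 0 < β₁ / (2 * T * α₁) := by positivity
  have he : e < -1 := by simp only [hedef]; linarith
  set k : ℝ := -(1 / T) * ((α₂ * β₁ - α₁ * β₂) / (α₁ * s)) with hkdef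
  set M : ℝ := Real.exp (|k| * (Real.pi / 2)) with hMdef
  -- base integrability of (1 + x²)^e
  have hbase : Integrable (fun x : ℝ => (1 + x ^ 2) ^ e) volume := by
    have h2e : (1 : ℝ) < -2 * e := by linarith
    have := integrable_rpow_neg_one_add_norm_sq (E := ℝ) (μ := volume) (r := -2 * e)
      (by simpa using h2e)
    have heq : -(-2 * e) / 2 = e := by ring
    simpa [Real.norm_eq_abs, sq_abs, heq] using this
  -- composed with the affine map v ↦ (α₁ v - α₂)/s
  have hcomp : Integrable (fun v : ℝ => (1 + ((α₁ * v - α₂) / s) ^ 2) ^ e) volume := by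
    have h1' : Integrable (fun x : ℝ => (1 + (x - α₂ / s) ^ 2) ^ e) volume :=
      hbase.comp_sub_right (α₂ / s)
    have hR : (α₁ / s) ≠ 0 := by positivity
    have h2' := (integrable_comp_mul_left_iff
      (fun x : ℝ => (1 + (x - α₂ / s) ^ 2) ^ e) hR).2 h1'
    refine h2'.congr (Filter.Eventually.of_forall fun v => ?_)
    have h : (α₁ / s) * v - α₂ / s = (α₁ * v - α₂) / s := by field_simp
    simp only [h]
  -- the quadratic rewritten
  have hq_eq : ∀ v : ℝ, α₁ * v ^ 2 - 2 * α₂ * v + α₃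
      = (Δ / α₁) * (1 + ((α₁ * v - α₂) / s) ^ 2) := by
    intro v
    rw [div_pow, hs2]
    field_simp
    ring
  have hqpos : ∀ v : ℝ, 0 < α₁ * v ^ 2 - 2 * α₂ * v + α₃ := by
    intro v
    rw [hq_eq v]
    positivity
  -- dominate
  refine Integrable.mono' ((hcomp.const_mul ((Δ / α₁) ^ e * M))) ?_
    (Filter.Eventually.of_forall fun v => ?_)
  · apply Measurable.aestronglyMeasurable
    have hm1 : Measurable fun v : ℝ => (α₁ * v ^ 2 - 2 * α₂ * v + α₃ : ℝ) := by fun_prop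
    have hm2 : Measurable fun v : ℝ => ((α₁ * v - α₂) / s : ℝ) := by fun_prop
    exact (hm1.pow_const e).mul ((hm2.arctan.const_mul k).exp)
  · have hu := Real.arctan_lt_pi_div_two ((α₁ * v - α₂) / s)
    have hl := Real.neg_pi_div_two_lt_arctan ((α₁ * v - α₂) / s)
    have habs : |Real.arctan ((α₁ * v - α₂) / s)| ≤ Real.pi / 2 :=
      abs_le.mpr ⟨hl.le, hu.le⟩
    have hexp : Real.exp (k * Real.arctan ((α₁ * v - α₂) / s)) ≤ M := by
      rw [hMdef]
      apply Real.exp_le_exp.2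
      calc k * Real.arctan ((α₁ * v - α₂) / s)
          ≤ |k * Real.arctan ((α₁ * v - α₂) / s)| := le_abs_self _
        _ = |k| * |Real.arctan ((α₁ * v - α₂) / s)| := abs_mul _ _
        _ ≤ |k| * (Real.pi / 2) := mul_le_mul_of_nonneg_left habs (abs_nonneg k)
    have hnn : 0 ≤ (α₁ * v ^ 2 - 2 * α₂ * v + α₃) ^ e := Real.rpow_nonneg (hqpos v).le _
    rw [Real.norm_eq_abs, abs_of_nonneg (by positivity)]
    calc (α₁ * v ^ 2 - 2 * α₂ * v + α₃) ^ e *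
          Real.exp (k * Real.arctan ((α₁ * v - α₂) / s))
        ≤ (α₁ * v ^ 2 - 2 * α₂ * v + α₃) ^ e * M := by gcongr
      _ = (Δ / α₁) ^ e * (1 + ((α₁ * v - α₂) / s) ^ 2) ^ e * M := by
          rw [hq_eq v, Real.mul_rpow (by positivity) (by positivity)]
      _ = (Δ / α₁) ^ e * M * (1 + ((α₁ * v - α₂) / s) ^ 2) ^ e := by ring
end

section
/- Let α₁, α₂, α₃ > 0 with α₁α₃ > α₂², let β₁ ∈ ℝ, and fix T > 0. For the depth-0 stationary distribution p_T(v) ∝ (α₁v² − 2α₂v + α₃)^{−1 − β₁/(2Tα₁)} · exp(bounded term), the second moment ∫ v² p_T(v) dv / ∫ p_T(v) dv is finite if and only if β₁/(2Tα₁) + 1 > 3/2, i.e. if and only if T < β₁/α₁. -/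
open MeasureTheory Set Filter

lemma aux_intOn_Iio_neg_rpow {s : ℝ} (hs : s < -1) :
    IntegrableOn (fun v : ℝ => (-v) ^ s) (Iio (-1 : ℝ)) volume := by
  have h := integrableOn_Ioi_rpow_of_lt hs one_pos
  have hpre : (Neg.neg ⁻¹' (Iio (-1 : ℝ)) : Set ℝ) = Ioi 1 := by
    ext x; simp
  have hmap : volume.restrict (Iio (-1 : ℝ))
      = (volume.restrict (Ioi (1 : ℝ))).map Neg.neg := by
    have h1 : ((volume : Measure ℝ).map Neg.neg).restrict (Iio (-1 : ℝ))
        = ((volume : Measure ℝ).restrict (Neg.neg ⁻¹' (Iio (-1 : ℝ)))).map Neg.neg :=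
      Measure.restrict_map measurable_neg measurableSet_Iio
    rw [Measure.map_neg_eq_self] at h1
    rw [h1, hpre]
  rw [IntegrableOn, hmap, measurableEmbedding_neg.integrable_map_iff]
  have : ((fun v : ℝ => (-v) ^ s) ∘ Neg.neg) = fun v : ℝ => v ^ s := by
    funext v; simp
  rw [this]
  exact h

/-- Divergence of the second moment of the depth-0 stationary distribution at
the critical temperature `T = β₁/α₁`. -/
theorem stmt9 (α₁ α₂ α₃ β₁ T : ℝ)
    (h1 : 0 < α₁) (h2 : 0 < α₂) (h3 : 0 < α₃)
    (hΔ : α₂ ^ 2 < α₁ * α₃) (hβ₁ : 0 < β₁) (hT : 0 < T)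
    (E : ℝ → ℝ) (hE : Continuous E)
    (c₁ c₂ : ℝ) (hc₁ : 0 < c₁) (hc₂ : 0 < c₂)
    (hEb : ∀ v : ℝ, c₁ ≤ E v ∧ E v ≤ c₂) :
    (Integrable (fun v : ℝ =>
        v ^ 2 * (α₁ * v ^ 2 - 2 * α₂ * v + α₃) ^ (-1 - β₁ / (2 * T * α₁) : ℝ) * E v)
      volume) ↔ T < β₁ / α₁ := by
  set p : ℝ := -1 - β₁ / (2 * T * α₁) with hp
  set s : ℝ := 2 + 2 * p with hs_def
  set f : ℝ → ℝ :=
    fun v : ℝ => v ^ 2 * (α₁ * v ^ 2 - 2 * α₂ * v + α₃) ^ p * E v with hf_def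
  have hTα : 0 < T * α₁ := mul_pos hT h1
  have hs_val : s = -(β₁ / (T * α₁)) := by
    rw [hs_def, hp]; field_simp; ring
  have hs_iff : s < -1 ↔ T < β₁ / α₁ := by
    have e1 : s < -1 ↔ 1 < β₁ / (T * α₁) := by
      rw [hs_val]; constructor <;> intro h <;> linarith
    have e2 : (1 : ℝ) < β₁ / (T * α₁) ↔ T * α₁ < β₁ := one_lt_div hTα
    have e3 : T < β₁ / α₁ ↔ T * α₁ < β₁ := lt_div_iff₀ h1
    rw [e1, e2, e3]
  have hp_neg : p < 0 := by
    have : 0 < β₁ / (2 * T * α₁) := by positivity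
    rw [hp]; linarith
  have hQpos : ∀ v : ℝ, 0 < α₁ * v ^ 2 - 2 * α₂ * v + α₃ := by
    intro v; nlinarith [sq_nonneg (α₁ * v - α₂)]
  have hfnn : ∀ v : ℝ, 0 ≤ f v := fun v =>
    mul_nonneg (mul_nonneg (sq_nonneg v) (Real.rpow_nonneg (hQpos v).le p))
      (hc₁.le.trans (hEb v).1)
  set C : ℝ := α₁ + 2 * α₂ + α₃ with hC_def
  have hCpos : 0 < C := by positivity
  set M : ℝ := max 1 (4 * α₂ / α₁) with hM_def
  have hM1 : (1 : ℝ) ≤ M := le_max_left _ _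
  have hM0 : (0 : ℝ) < M := lt_of_lt_of_le one_pos hM1
  -- quadratic bounds in the tails
  have hQub : ∀ v : ℝ, 1 ≤ |v| → α₁ * v ^ 2 - 2 * α₂ * v + α₃ ≤ C * v ^ 2 := by
    intro v hv
    have h := abs_nonneg v
    have hsq : v ^ 2 = |v| ^ 2 := (sq_abs v).symm
    have hle : -v ≤ |v| := neg_le_abs v
    nlinarith [sq_abs v, neg_le_abs v, sq_nonneg (|v| - 1)]
  have hQlb : ∀ v : ℝ, M ≤ |v| → α₁ / 2 * v ^ 2 ≤ α₁ * v ^ 2 - 2 * α₂ * v + α₃ := by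
    intro v hv
    rcases le_or_gt v 0 with hv0 | hv0
    · nlinarith [sq_nonneg v]
    · have hvM : M ≤ v := by rwa [abs_of_pos hv0] at hv
      have h4 : 4 * α₂ / α₁ ≤ v := le_trans (le_max_right _ _) hvM
      have h4' : 4 * α₂ ≤ α₁ * v := by
        rw [div_le_iff₀ h1] at h4; linarith
      nlinarith [mul_le_mul_of_nonneg_right h4' hv0.le]
  -- rpow algebra
  have hpow : ∀ v : ℝ, 0 < |v| → ∀ b : ℝ, 0 < b →
      v ^ 2 * (b * v ^ 2) ^ p = b ^ p * |v| ^ s := by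
    intro v hv b hb
    have h1' : (b * v ^ 2) ^ p = b ^ p * ((v ^ 2 : ℝ)) ^ p :=
      Real.mul_rpow hb.le (sq_nonneg v)
    have h3' : (v : ℝ) ^ 2 = |v| ^ (2 : ℝ) := by
      rw [← sq_abs v, ← Real.rpow_natCast |v| 2]; norm_num
    have h2' : ((v ^ 2 : ℝ)) ^ p = |v| ^ (2 * p) := by
      rw [h3', ← Real.rpow_mul (abs_nonneg v)]
    rw [h1', h2', h3', hs_def, Real.rpow_add hv]
    ring
  -- pointwise tail bounds on f
  have flb : ∀ v : ℝ, M ≤ |v| → c₁ * C ^ p * |v| ^ s ≤ f v := by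
    intro v hv
    have hva : 0 < |v| := lt_of_lt_of_le hM0 hv
    have hub := hQub v (le_trans hM1 hv)
    have hr : (C * v ^ 2) ^ p ≤ (α₁ * v ^ 2 - 2 * α₂ * v + α₃) ^ p :=
      Real.rpow_le_rpow_of_nonpos (hQpos v) hub hp_neg.le
    have h4 : v ^ 2 * (C * v ^ 2) ^ p ≤ v ^ 2 * (α₁ * v ^ 2 - 2 * α₂ * v + α₃) ^ p :=
      mul_le_mul_of_nonneg_left hr (sq_nonneg v)
    have h5 : (v ^ 2 * (C * v ^ 2) ^ p) * c₁
        ≤ (v ^ 2 * (α₁ * v ^ 2 - 2 * α₂ * v + α₃) ^ p) * E v :=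
      mul_le_mul h4 (hEb v).1 hc₁.le
        (mul_nonneg (sq_nonneg v) (Real.rpow_nonneg (hQpos v).le p))
    have h6 := hpow v hva C hCpos
    calc c₁ * C ^ p * |v| ^ s = (v ^ 2 * (C * v ^ 2) ^ p) * c₁ := by rw [h6]; ring
      _ ≤ f v := h5
  have fub : ∀ v : ℝ, M ≤ |v| → f v ≤ c₂ * (α₁ / 2) ^ p * |v| ^ s := by
    intro v hv
    have hva : 0 < |v| := lt_of_lt_of_le hM0 hv
    have hlb := hQlb v hv
    have hhalf : 0 < α₁ / 2 * v ^ 2 := by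
      have hvne : v ≠ 0 := abs_pos.mp hva
      have : (0:ℝ) < v ^ 2 := pow_pos (abs_pos.mpr hvne) 2 |>.trans_le (le_of_eq (sq_abs v))
      nlinarith
    have hr : (α₁ * v ^ 2 - 2 * α₂ * v + α₃) ^ p ≤ (α₁ / 2 * v ^ 2) ^ p :=
      Real.rpow_le_rpow_of_nonpos hhalf hlb hp_neg.le
    have h4 : v ^ 2 * (α₁ * v ^ 2 - 2 * α₂ * v + α₃) ^ p
        ≤ v ^ 2 * (α₁ / 2 * v ^ 2) ^ p :=
      mul_le_mul_of_nonneg_left hr (sq_nonneg v)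
    have h5 : (v ^ 2 * (α₁ * v ^ 2 - 2 * α₂ * v + α₃) ^ p) * E v
        ≤ (v ^ 2 * (α₁ / 2 * v ^ 2) ^ p) * c₂ :=
      mul_le_mul h4 (hEb v).2 (hc₁.le.trans (hEb v).1)
        (mul_nonneg (sq_nonneg v) (Real.rpow_nonneg hhalf.le p))
    have h6 := hpow v hva (α₁ / 2) (by positivity)
    calc f v ≤ (v ^ 2 * (α₁ / 2 * v ^ 2) ^ p) * c₂ := h5
      _ = c₂ * (α₁ / 2) ^ p * |v| ^ s := by rw [h6]; ring
  constructor
  · -- integrable → T < β₁/α₁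
    intro hf
    by_contra hcon
    have hs_not : ¬ s < -1 := fun h => hcon (hs_iff.mp h)
    have hk : 0 < c₁ * C ^ p := by
      have := Real.rpow_pos_of_pos hCpos p; positivity
    have hint : IntegrableOn (fun v : ℝ => v ^ s) (Ioi M) volume := by
      refine (hf.integrableOn.const_mul ((c₁ * C ^ p)⁻¹)).mono'
        (ContinuousOn.aestronglyMeasurable
          (fun v hv => (Real.continuousAt_rpow_const v s
            (Or.inl (ne_of_gt (lt_of_lt_of_le hM0 (le_of_lt hv))))).continuousWithinAt)
          measurableSet_Ioi) ?_
      refine (ae_restrict_iff' measurableSet_Ioi).2 (Filter.Eventually.of_forall ?_)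
      intro v hv
      have hvM : M ≤ v := (le_of_lt hv)
      have hv0 : 0 < v := lt_of_lt_of_le hM0 hvM
      have habs : |v| = v := abs_of_pos hv0
      have hlow := flb v (by rwa [habs])
      rw [habs] at hlow
      rw [Real.norm_eq_abs, abs_of_nonneg (Real.rpow_nonneg hv0.le s)]
      rw [inv_mul_eq_div, le_div_iff₀ hk]
      linarith [hlow]
    rw [integrableOn_Ioi_rpow_iff hM0] at hint
    exact hs_not hint
  · -- T < β₁/α₁ → integrable
    intro hT'
    have hs : s < -1 := hs_iff.mpr hT'
    have hQc : Continuous fun v : ℝ => α₁ * v ^ 2 - 2 * α₂ * v + α₃ :=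
      ((continuous_const.mul (continuous_pow 2)).sub
        (continuous_const.mul continuous_id)).add continuous_const
    have hQpc : Continuous fun v : ℝ => (α₁ * v ^ 2 - 2 * α₂ * v + α₃) ^ p :=
      hQc.rpow_const (fun v => Or.inl (hQpos v).ne')
    have hfc : Continuous f := ((continuous_pow 2).mul hQpc).mul hE
    have hOtop : f =O[atTop] fun v : ℝ => v ^ s := by
      rw [Asymptotics.isBigO_iff]
      refine ⟨c₂ * (α₁ / 2) ^ p, ?_⟩
      filter_upwards [Filter.eventually_ge_atTop M] with v hv
      have hv0 : 0 < v := lt_of_lt_of_le hM0 hv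
      have habs : |v| = v := abs_of_pos hv0
      have h2' := fub v (by rwa [habs])
      rw [habs] at h2'
      rw [Real.norm_eq_abs, abs_of_nonneg (hfnn v), Real.norm_eq_abs,
        abs_of_nonneg (Real.rpow_nonneg hv0.le s)]
      linarith
    have hObot : f =O[atBot] fun v : ℝ => (-v) ^ s := by
      rw [Asymptotics.isBigO_iff]
      refine ⟨c₂ * (α₁ / 2) ^ p, ?_⟩
      filter_upwards [Filter.eventually_le_atBot (-M)] with v hv
      have hv0 : v < 0 := lt_of_le_of_lt hv (by linarith)
      have habs : |v| = -v := abs_of_neg hv0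
      have h2' := fub v (by rw [habs]; linarith)
      rw [habs] at h2'
      have hnv : 0 < -v := by linarith
      rw [Real.norm_eq_abs, abs_of_nonneg (hfnn v), Real.norm_eq_abs,
        abs_of_nonneg (Real.rpow_nonneg hnv.le s)]
      linarith
    have hgtop : IntegrableAtFilter (fun v : ℝ => v ^ s) atTop volume :=
      ⟨Ioi 1, Ioi_mem_atTop 1, integrableOn_Ioi_rpow_of_lt hs one_pos⟩
    have hgbot : IntegrableAtFilter (fun v : ℝ => (-v) ^ s) atBot volume :=
      ⟨Iio (-1), Iio_mem_atBot _, aux_intOn_Iio_neg_rpow hs⟩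
    exact hfc.locallyIntegrable.integrable_of_isBigO_atBot_atTop hObot hgbot hOtop hgtop
end
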